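/- Let $n, N \ge 1$, $1 < q < \infty$, $\sigma, \tau > 0$, $K > \sigma$ and $C > 0$. Let $(A_s)_{s > 0}$ be a family of bounded linear operators on $L^q(\mathbb{R}^n, \mathbb{C}^N)$ such that $s \mapsto A_s u$ is strongly measurable for each $u$, and such that for all $s > 0$, all Borel sets $E, F \subseteq \mathbb{R}^n$ and all $u \in L^q$: $\|\chi_F A_s(\chi_E u)\|_{L^q} \le C \left(1 + \frac{d(E,F)}{s}\right)^{-K} \|\chi_E u\|_{L^q}$. Let $t > 0$ and let $m : (0,\infty) \to \mathbb{C}$ be measurable with $|m(s)| \le \min\!\left(\left(\frac{t}{s}\right)^\sigma, \left(\frac{s}{t}\right)^\tau\right)$ for all $s > 0$. Then for every $u \in L^q$ the Bochner integral $T u := \int_0^\infty m(s)\, A_s u\, \frac{ds}{s}$ converges in $L^q$, and there is a constant $C'$ depending only on $\sigma, \tau, K, C$ such that for all Borel sets $E, F \subseteq \mathbb{R}^n$ and all $u \in L^q$: $\|\chi_F T(\chi_E u)\|_{L^q} \le C' \left(1 + \frac{d(E,F)}{t}\right)^{-\sigma} \|\chi_E u\|_{L^q}$. -/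

import Mathlib

/-!
With `d = d(E,F)`, the off-diagonal bound for each `A s` reduces the estimate to the scalar
integral `∫₀^∞ min((t/s)^σ, (s/t)^τ) (1 + d/s)^(-K) ds/s`. Split it at `s = t` and at
`s = max d t`: on `(0, t]` the factor `(s/t)^τ` is integrable and
`(1 + d/s)^(-K) ≤ (1 + d/t)^(-σ)`; on `(t, d]` the bound `(1 + d/s)^(-K) ≤ (s/d)^K` is
integrable against `(t/s)^σ` because `K > σ`; beyond `max d t` the factor `(t/s)^σ` alone
suffices. The last two pieces are multiples of `(t / max d t)^σ ≤ 2^σ (1 + d/t)^(-σ)`.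
Bochner integrability of `s ↦ m(s) A_s u / s` is the case `E = F = univ` of the same bound.
-/

open MeasureTheory ENNReal

noncomputable def setDist {α : Type*} [PseudoMetricSpace α] (E F : Set α) : ℝ :=
  sInf (Set.image2 dist E F)

noncomputable def indLp {α : Type*} [MeasurableSpace α] {μ : Measure α}
    {E : Type*} [NormedAddCommGroup E] {p : ℝ≥0∞}
    {S : Set α} (hS : MeasurableSet S) (u : Lp E p μ) : Lp E p μ :=
  MeasureTheory.MemLp.toLp (S.indicator u) ((MeasureTheory.Lp.memLp u).indicator hS)

lemma setDist_nonneg {α : Type*} [PseudoMetricSpace α] (E F : Set α) : 0 ≤ setDist E F :=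
  Real.sInf_nonneg (Set.forall_mem_image2.2 fun _ _ _ _ => dist_nonneg)

section IndicatorLp

variable {α V : Type*} [MeasurableSpace α] {μ : Measure α} [NormedAddCommGroup V] {p : ℝ≥0∞}
  {S : Set α} (hS : MeasurableSet S)

lemma indLp_add (u v : Lp V p μ) : indLp hS (u + v) = indLp hS u + indLp hS v := by
  simp only [indLp, ← MemLp.toLp_add]
  refine MemLp.toLp_congr _ _ ?_
  filter_upwards [Lp.coeFn_add u v] with x hx
  rw [Pi.add_apply]
  by_cases hxS : x ∈ S
  · simp only [Set.indicator_of_mem hxS, hx, Pi.add_apply]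
  · simp only [Set.indicator_of_notMem hxS, add_zero]

lemma indLp_smul {𝕜 : Type*} [NormedRing 𝕜] [Module 𝕜 V] [IsBoundedSMul 𝕜 V] (c : 𝕜)
    (u : Lp V p μ) : indLp hS (c • u) = c • indLp hS u := by
  simp only [indLp, ← MemLp.toLp_const_smul]
  refine MemLp.toLp_congr _ _ ?_
  filter_upwards [Lp.coeFn_smul c u] with x hx
  rw [Pi.smul_apply]
  by_cases hxS : x ∈ S
  · simp only [Set.indicator_of_mem hxS, hx, Pi.smul_apply]
  · simp only [Set.indicator_of_notMem hxS, smul_zero]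

lemma norm_indLp_le (u : Lp V p μ) : ‖indLp hS u‖ ≤ ‖u‖ := by
  rw [indLp, Lp.norm_toLp, Lp.norm_def]
  exact ENNReal.toReal_mono (Lp.eLpNorm_ne_top u) (eLpNorm_indicator_le _)

lemma indLp_univ (u : Lp V p μ) : indLp MeasurableSet.univ u = u := by
  simp only [indLp, Set.indicator_univ, Lp.toLp_coeFn]

variable (𝕜 : Type*) [NormedField 𝕜] [NormedSpace 𝕜 V] [Fact (1 ≤ p)]

noncomputable def indLpCLM : Lp V p μ →L[𝕜] Lp V p μ :=
  LinearMap.mkContinuous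
    { toFun := indLp hS
      map_add' := indLp_add hS
      map_smul' := indLp_smul hS } 1
    fun u => by simpa using norm_indLp_le hS u

@[simp] lemma indLpCLM_apply (u : Lp V p μ) : indLpCLM hS 𝕜 u = indLp hS u := rfl

end IndicatorLp

section ScalarKernel

open Set

noncomputable def decayProfile (σ τ t s : ℝ) : ℝ := min ((t / s) ^ σ) ((s / t) ^ τ)

noncomputable def offDiagKernel (σ τ K t d s : ℝ) : ℝ :=
  decayProfile σ τ t s * (1 + d / s) ^ (-K) / s

variable {σ τ K t d s : ℝ}

lemma decayProfile_nonneg (ht : 0 ≤ t) (hs : 0 ≤ s) : 0 ≤ decayProfile σ τ t s :=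
  le_min (by positivity) (by positivity)

lemma decayProfile_le_left (ht : 0 ≤ t) (hs : 0 < s) :
    decayProfile σ τ t s ≤ t ^ σ * s ^ (-σ) := by
  rw [Real.rpow_neg hs.le, ← div_eq_mul_inv, ← Real.div_rpow ht hs.le]
  exact min_le_left _ _

lemma decayProfile_le_right (ht : 0 < t) (hs : 0 ≤ s) :
    decayProfile σ τ t s ≤ t ^ (-τ) * s ^ τ := by
  rw [Real.rpow_neg ht.le, mul_comm, ← div_eq_mul_inv, ← Real.div_rpow hs ht.le]
  exact min_le_right _ _

lemma one_add_div_rpow_neg_le_one (hK : 0 ≤ K) (hd : 0 ≤ d) (hs : 0 ≤ s) :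
    (1 + d / s) ^ (-K) ≤ 1 :=
  Real.rpow_le_one_of_one_le_of_nonpos (le_add_of_nonneg_right (div_nonneg hd hs))
    (neg_nonpos.2 hK)

lemma offDiagKernel_nonneg (ht : 0 ≤ t) (hd : 0 ≤ d) (hs : 0 ≤ s) :
    0 ≤ offDiagKernel σ τ K t d s := by
  have := decayProfile_nonneg (σ := σ) (τ := τ) ht hs
  unfold offDiagKernel
  positivity

lemma offDiagKernel_le_of_le (hσ : 0 ≤ σ) (hK : σ ≤ K) (ht : 0 < t) (hd : 0 ≤ d) (hs : 0 < s)
    (hst : s ≤ t) : offDiagKernel σ τ K t d s ≤ (1 + d / t) ^ (-σ) * t ^ (-τ) * s ^ (τ - 1) := by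
  have hdecay : (1 + d / s) ^ (-K) ≤ (1 + d / t) ^ (-σ) :=
    calc (1 + d / s) ^ (-K) ≤ (1 + d / t) ^ (-K) :=
          Real.rpow_le_rpow_of_nonpos (by positivity) (by gcongr) (by linarith)
      _ ≤ (1 + d / t) ^ (-σ) :=
          Real.rpow_le_rpow_of_exponent_le (le_add_of_nonneg_right (by positivity)) (by linarith)
  calc offDiagKernel σ τ K t d s = (1 + d / s) ^ (-K) * (decayProfile σ τ t s / s) := by
        unfold offDiagKernel; ring
    _ ≤ (1 + d / t) ^ (-σ) * (t ^ (-τ) * s ^ τ / s) := by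
        gcongr
        · exact div_nonneg (decayProfile_nonneg ht.le hs.le) hs.le
        · exact decayProfile_le_right ht hs.le
    _ = (1 + d / t) ^ (-σ) * t ^ (-τ) * s ^ (τ - 1) := by
        rw [Real.rpow_sub_one hs.ne']; ring

lemma offDiagKernel_le_of_lt_of_le (hK : 0 ≤ K) (ht : 0 < t) (hts : t < s) (hsd : s ≤ d) :
    offDiagKernel σ τ K t d s ≤ t ^ σ * d ^ (-K) * s ^ (K - σ - 1) := by
  have hs : 0 < s := ht.trans hts
  have hd : 0 < d := hs.trans_le hsd
  have hdecay : (1 + d / s) ^ (-K) ≤ d ^ (-K) * s ^ K :=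
    calc (1 + d / s) ^ (-K) ≤ (d / s) ^ (-K) :=
          Real.rpow_le_rpow_of_nonpos (by positivity) (by linarith) (by linarith)
      _ = d ^ (-K) * s ^ K := by
          rw [Real.div_rpow hd.le hs.le, Real.rpow_neg hs.le, div_inv_eq_mul]
  calc offDiagKernel σ τ K t d s ≤ t ^ σ * s ^ (-σ) * (d ^ (-K) * s ^ K) / s := by
        unfold offDiagKernel
        gcongr
        exact decayProfile_le_left ht.le hs
    _ = t ^ σ * d ^ (-K) * s ^ (K - σ - 1) := by
        rw [Real.rpow_sub_one hs.ne', Real.rpow_sub hs, Real.rpow_neg hs.le]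
        field_simp

lemma offDiagKernel_le (hK : 0 ≤ K) (ht : 0 ≤ t) (hd : 0 ≤ d) (hs : 0 < s) :
    offDiagKernel σ τ K t d s ≤ t ^ σ * s ^ (-σ - 1) :=
  calc offDiagKernel σ τ K t d s ≤ t ^ σ * s ^ (-σ) * 1 / s := by
        unfold offDiagKernel
        gcongr
        exacts [decayProfile_le_left ht hs, one_add_div_rpow_neg_le_one hK hd hs.le]
    _ = t ^ σ * s ^ (-σ - 1) := by rw [Real.rpow_sub_one hs.ne']; ring

lemma integrableOn_offDiagKernel (hσ : 0 < σ) (hτ : 0 < τ) (hK : σ ≤ K) (ht : 0 < t)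
    (hd : 0 ≤ d) : IntegrableOn (offDiagKernel σ τ K t d) (Ioi 0) := by
  have hmeas : Measurable (offDiagKernel σ τ K t d) := by
    unfold offDiagKernel decayProfile; fun_prop
  rw [← Ioc_union_Ioi_eq_Ioi ht.le]
  refine IntegrableOn.union ?_ ?_
  · refine (((intervalIntegral.intervalIntegrable_rpow' (a := 0) (b := t) (r := τ - 1)
      (by linarith)).1).const_mul (t ^ (-τ))).mono' hmeas.aestronglyMeasurable ?_
    filter_upwards [ae_restrict_mem measurableSet_Ioc] with s hs
    rw [Real.norm_of_nonneg (offDiagKernel_nonneg ht.le hd hs.1.le)]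
    calc offDiagKernel σ τ K t d s ≤ (1 + d / t) ^ (-σ) * t ^ (-τ) * s ^ (τ - 1) :=
          offDiagKernel_le_of_le hσ.le hK ht hd hs.1 hs.2
      _ ≤ t ^ (-τ) * s ^ (τ - 1) := by
          rw [mul_assoc]
          exact mul_le_of_le_one_left (mul_nonneg (by positivity) (Real.rpow_nonneg hs.1.le _))
            (one_add_div_rpow_neg_le_one hσ.le hd ht.le)
  · refine ((integrableOn_Ioi_rpow_of_lt (by linarith : -σ - 1 < -1) ht).const_mul
      (t ^ σ)).mono' hmeas.aestronglyMeasurable ?_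
    filter_upwards [ae_restrict_mem measurableSet_Ioi] with s hs
    rw [Real.norm_of_nonneg (offDiagKernel_nonneg ht.le hd (ht.trans hs).le)]
    exact offDiagKernel_le (hσ.le.trans hK) ht.le hd (ht.trans hs)

lemma integral_rpow_le {a b r : ℝ} (ha : 0 ≤ a) (hr : -1 < r) :
    ∫ s in a..b, s ^ r ≤ b ^ (r + 1) / (r + 1) := by
  rw [integral_rpow (Or.inl hr)]
  have : 0 < r + 1 := by linarith
  gcongr
  exact sub_le_self _ (by positivity)

lemma rpow_mul_max_rpow_neg_le (hσ : 0 ≤ σ) (ht : 0 < t) (hd : 0 ≤ d) :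
    t ^ σ * max d t ^ (-σ) ≤ 2 ^ σ * (1 + d / t) ^ (-σ) := by
  have hD : 0 < max d t := ht.trans_le (le_max_right d t)
  calc t ^ σ * max d t ^ (-σ) = (t / max d t) ^ σ := by
        rw [Real.div_rpow ht.le hD.le, Real.rpow_neg hD.le, div_eq_mul_inv]
    _ ≤ (2 * (1 + d / t)⁻¹) ^ σ := by
        gcongr
        rw [show 2 * (1 + d / t)⁻¹ = 2 * t / (t + d) by field_simp,
          div_le_div_iff₀ hD (by positivity)]
        nlinarith [le_max_left d t, le_max_right d t]
    _ = 2 ^ σ * (1 + d / t) ^ (-σ) := by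
        rw [Real.mul_rpow zero_le_two (by positivity), Real.inv_rpow (by positivity),
          Real.rpow_neg (by positivity)]

theorem integral_offDiagKernel_le (hσ : 0 < σ) (hτ : 0 < τ) (hK : σ < K) (ht : 0 < t)
    (hd : 0 ≤ d) :
    ∫ s in Ioi 0, offDiagKernel σ τ K t d s ≤
      2 ^ σ * (1 / τ + 1 / σ + 1 / (K - σ)) * (1 + d / t) ^ (-σ) := by
  set D := max d t
  set w := (1 + d / t) ^ (-σ)
  have htD : t ≤ D := le_max_right d t
  have hD : 0 < D := ht.trans_le htD
  have hKσ : 0 < K - σ := sub_pos.2 hK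
  have hint := integrableOn_offDiagKernel hσ hτ hK.le ht hd
  have hint_Ioc {a b : ℝ} (ha : 0 ≤ a) (hab : a ≤ b) :
      IntervalIntegrable (offDiagKernel σ τ K t d) volume a b :=
    (intervalIntegrable_iff_integrableOn_Ioc_of_le hab).2
      (hint.mono_set (Ioc_subset_Ioi_self.trans (Ioi_subset_Ioi ha)))
  have hnear : ∫ s in 0..t, offDiagKernel σ τ K t d s ≤ w / τ :=
    calc ∫ s in 0..t, offDiagKernel σ τ K t d s ≤ ∫ s in 0..t, w * t ^ (-τ) * s ^ (τ - 1) :=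
          intervalIntegral.integral_mono_on_of_le_Ioo ht.le (hint_Ioc le_rfl ht.le)
            ((intervalIntegral.intervalIntegrable_rpow' (by linarith)).const_mul _)
            fun s hs => offDiagKernel_le_of_le hσ.le hK.le ht hd hs.1 hs.2.le
      _ ≤ w * t ^ (-τ) * (t ^ τ / τ) := by
          rw [intervalIntegral.integral_const_mul]
          gcongr
          simpa using integral_rpow_le (b := t) le_rfl (by linarith : -1 < τ - 1)
      _ = w / τ := by rw [Real.rpow_neg ht.le]; field_simp
  have hmid : ∫ s in t..D, offDiagKernel σ τ K t d s ≤ t ^ σ * D ^ (-σ) / (K - σ) :=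
    calc ∫ s in t..D, offDiagKernel σ τ K t d s
          ≤ ∫ s in t..D, t ^ σ * D ^ (-K) * s ^ (K - σ - 1) := by
          refine intervalIntegral.integral_mono_on_of_le_Ioo htD (hint_Ioc ht.le htD)
            ((intervalIntegral.intervalIntegrable_rpow' (by linarith)).const_mul _) ?_
          intro s ⟨hts, hsD⟩
          have hsd : s < d := (lt_max_iff.1 hsD).resolve_right hts.not_gt
          rw [show D = d from max_eq_left (hts.trans hsd).le]
          exact offDiagKernel_le_of_lt_of_le (hσ.le.trans hK.le) ht hts hsd.le
      _ ≤ t ^ σ * D ^ (-K) * (D ^ (K - σ) / (K - σ)) := by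
          rw [intervalIntegral.integral_const_mul]
          gcongr
          simpa using integral_rpow_le (b := D) ht.le (by linarith : -1 < K - σ - 1)
      _ = t ^ σ * D ^ (-σ) / (K - σ) := by
          rw [mul_assoc, ← mul_div_assoc, ← Real.rpow_add hD]; ring_nf
  have hfar : ∫ s in Ioi D, offDiagKernel σ τ K t d s ≤ t ^ σ * D ^ (-σ) / σ :=
    calc ∫ s in Ioi D, offDiagKernel σ τ K t d s ≤ ∫ s in Ioi D, t ^ σ * s ^ (-σ - 1) :=
          setIntegral_mono_on (hint.mono_set (Ioi_subset_Ioi hD.le))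
            ((integrableOn_Ioi_rpow_of_lt (by linarith) hD).const_mul _) measurableSet_Ioi
            fun s hs => offDiagKernel_le (hσ.le.trans hK.le) ht.le hd (hD.trans hs)
      _ = t ^ σ * D ^ (-σ) / σ := by
          rw [integral_const_mul, integral_Ioi_rpow_of_lt (by linarith) hD, sub_add_cancel]
          field_simp
  have hratio : t ^ σ * D ^ (-σ) ≤ 2 ^ σ * w := rpow_mul_max_rpow_neg_le hσ.le ht hd
  have hw : w / τ ≤ 2 ^ σ * w / τ := by
    gcongr
    exact le_mul_of_one_le_left (by positivity) (Real.one_le_rpow one_le_two hσ.le)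
  rw [← intervalIntegral.integral_interval_add_Ioi hint (hint.mono_set (Ioi_subset_Ioi ht.le)),
    ← intervalIntegral.integral_interval_add_Ioi (hint.mono_set (Ioi_subset_Ioi ht.le))
      (hint.mono_set (Ioi_subset_Ioi hD.le))]
  calc _ ≤ 2 ^ σ * w / τ + 2 ^ σ * w / (K - σ) + 2 ^ σ * w / σ := by
        have hmid' := div_le_div_of_nonneg_right hratio hKσ.le
        have hfar' := div_le_div_of_nonneg_right hratio hσ.le
        linarith
    _ = _ := by ring

end ScalarKernel

section OffDiagonal

open Set

variable {α V : Type*} [PseudoMetricSpace α] [MeasurableSpace α] {μ : Measure α}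
  [NormedAddCommGroup V] [NormedSpace ℂ V] {p : ℝ≥0∞} [Fact (1 ≤ p)]

def OffDiagonalEstimate (A : ℝ → Lp V p μ →L[ℂ] Lp V p μ) (C K : ℝ) : Prop :=
  ∀ s : ℝ, 0 < s → ∀ (E F : Set α) (hE : MeasurableSet E) (hF : MeasurableSet F), ∀ u,
    ‖indLp hF (A s (indLp hE u))‖ ≤ C * (1 + setDist E F / s) ^ (-K) * ‖indLp hE u‖

variable {A : ℝ → Lp V p μ →L[ℂ] Lp V p μ} {C K σ τ t : ℝ} {m : ℝ → ℂ}
  {E F : Set α} (hE : MeasurableSet E) (hF : MeasurableSet F)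

lemma OffDiagonalEstimate.norm_smul_le (hA : OffDiagonalEstimate A C K)
    (hm : ∀ s, 0 < s → ‖m s‖ ≤ decayProfile σ τ t s) {s : ℝ} (hs : 0 < s) (u : Lp V p μ) :
    ‖(m s / (s : ℂ)) • indLp hF (A s (indLp hE u))‖ ≤
      C * ‖indLp hE u‖ * offDiagKernel σ τ K t (setDist E F) s := by
  rw [norm_smul, norm_div, Complex.norm_real, Real.norm_of_nonneg hs.le]
  calc ‖m s‖ / s * ‖indLp hF (A s (indLp hE u))‖
      ≤ decayProfile σ τ t s / s * (C * (1 + setDist E F / s) ^ (-K) * ‖indLp hE u‖) :=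
        mul_le_mul (by gcongr; exact hm s hs) (hA s hs E F hE hF u) (norm_nonneg _)
          (div_nonneg ((norm_nonneg _).trans (hm s hs)) hs.le)
    _ = C * ‖indLp hE u‖ * offDiagKernel σ τ K t (setDist E F) s := by
        unfold offDiagKernel; ring

lemma OffDiagonalEstimate.integrable_smul_indLp
    (hAmeas : ∀ u, AEStronglyMeasurable (fun s => A s u) (volume.restrict (Ioi 0)))
    (hA : OffDiagonalEstimate A C K) (hmeas : Measurable m)
    (hm : ∀ s, 0 < s → ‖m s‖ ≤ decayProfile σ τ t s)
    (hσ : 0 < σ) (hτ : 0 < τ) (hK : σ ≤ K) (ht : 0 < t) (u : Lp V p μ) :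
    Integrable (fun s => (m s / (s : ℂ)) • indLp hF (A s (indLp hE u)))
      (volume.restrict (Ioi 0)) := by
  refine ((integrableOn_offDiagKernel hσ hτ hK ht (setDist_nonneg E F)).const_mul
    (C * ‖indLp hE u‖)).mono' ?_ ?_
  · exact (hmeas.div Complex.measurable_ofReal).aestronglyMeasurable.smul
      ((indLpCLM hF ℂ).continuous.comp_aestronglyMeasurable (hAmeas _))
  · filter_upwards [ae_restrict_mem measurableSet_Ioi] with s hs
    exact hA.norm_smul_le hE hF hm hs u

lemma OffDiagonalEstimate.integrable_smul
    (hAmeas : ∀ u, AEStronglyMeasurable (fun s => A s u) (volume.restrict (Ioi 0)))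
    (hA : OffDiagonalEstimate A C K) (hmeas : Measurable m)
    (hm : ∀ s, 0 < s → ‖m s‖ ≤ decayProfile σ τ t s)
    (hσ : 0 < σ) (hτ : 0 < τ) (hK : σ ≤ K) (ht : 0 < t) (u : Lp V p μ) :
    Integrable (fun s => (m s / (s : ℂ)) • A s u) (volume.restrict (Ioi 0)) := by
  simpa only [indLp_univ] using
    hA.integrable_smul_indLp MeasurableSet.univ MeasurableSet.univ hAmeas hmeas hm hσ hτ hK ht u

theorem OffDiagonalEstimate.norm_indLp_integral_le [CompleteSpace V]
    (hAmeas : ∀ u, AEStronglyMeasurable (fun s => A s u) (volume.restrict (Ioi 0)))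
    (hA : OffDiagonalEstimate A C K) (hmeas : Measurable m)
    (hm : ∀ s, 0 < s → ‖m s‖ ≤ decayProfile σ τ t s)
    (hσ : 0 < σ) (hτ : 0 < τ) (hK : σ < K) (hC : 0 ≤ C) (ht : 0 < t) (u : Lp V p μ) :
    ‖indLp hF (∫ s in Ioi 0, (m s / (s : ℂ)) • A s (indLp hE u))‖ ≤
      C * (2 ^ σ * (1 / τ + 1 / σ + 1 / (K - σ))) * (1 + setDist E F / t) ^ (-σ) *
        ‖indLp hE u‖ := by
  rw [← indLpCLM_apply hF ℂ, ← (indLpCLM hF ℂ).integral_comp_comm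
    (hA.integrable_smul hAmeas hmeas hm hσ hτ hK.le ht _)]
  simp only [map_smul, indLpCLM_apply]
  calc ‖∫ s in Ioi 0, (m s / (s : ℂ)) • indLp hF (A s (indLp hE u))‖
      ≤ ∫ s in Ioi 0, C * ‖indLp hE u‖ * offDiagKernel σ τ K t (setDist E F) s :=
        norm_integral_le_of_norm_le
          ((integrableOn_offDiagKernel hσ hτ hK.le ht (setDist_nonneg E F)).const_mul _)
          ((ae_restrict_mem measurableSet_Ioi).mono fun s hs => hA.norm_smul_le hE hF hm hs u)
    _ = C * ‖indLp hE u‖ * ∫ s in Ioi 0, offDiagKernel σ τ K t (setDist E F) s :=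
        integral_const_mul _ _
    _ ≤ C * ‖indLp hE u‖ *
          (2 ^ σ * (1 / τ + 1 / σ + 1 / (K - σ)) * (1 + setDist E F / t) ^ (-σ)) := by
        gcongr
        exact integral_offDiagKernel_le hσ hτ hK ht (setDist_nonneg E F)
    _ = _ := by ring

end OffDiagonal

/-- Abstract form of Proposition 3.1: if a strongly measurable family
`(A_s)_{s>0}` of bounded operators on `L^q(ℝ^n, ℂ^N)` satisfies off-diagonal estimates
`‖χ_F A_s (χ_E u)‖ ≤ C (1 + d(E,F)/s)^{-K}‖χ_E u‖` of order `K > σ`, and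
`|m(s)| ≤ min((t/s)^σ, (s/t)^τ)` with `t > 0`, `σ, τ > 0`, then
`T u = ∫₀^∞ m(s) A_s u ds/s` converges in `L^q` and satisfies
`‖χ_F T (χ_E u)‖ ≤ C' (1 + d(E,F)/t)^{-σ} ‖χ_E u‖` with `C'` depending only on
`σ, τ, K, C`. -/
theorem stmt11 (σ τ K C : ℝ) (hσ : 0 < σ) (hτ : 0 < τ) (hK : σ < K) (hC : 0 < C) :
    ∃ C' : ℝ, 0 < C' ∧
      ∀ (n N : ℕ), 1 ≤ n → 1 ≤ N → ∀ (q : ℝ≥0∞) [Fact (1 ≤ q)], 1 < q → q ≠ ⊤ →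
      ∀ (A : ℝ →
        (Lp (EuclideanSpace ℂ (Fin N)) q (volume : Measure (EuclideanSpace ℝ (Fin n))) →L[ℂ]
          Lp (EuclideanSpace ℂ (Fin N)) q (volume : Measure (EuclideanSpace ℝ (Fin n))))),
      (∀ u, AEStronglyMeasurable (fun s => A s u) (volume.restrict (Set.Ioi (0 : ℝ)))) →
      (∀ s : ℝ, 0 < s → ∀ (E F : Set (EuclideanSpace ℝ (Fin n)))
          (hE : MeasurableSet E) (hF : MeasurableSet F), ∀ u,
        ‖indLp hF (A s (indLp hE u))‖ ≤ C * (1 + setDist E F / s) ^ (-K) * ‖indLp hE u‖) →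
      ∀ (t : ℝ), 0 < t → ∀ (m : ℝ → ℂ), Measurable m →
      (∀ s : ℝ, 0 < s → ‖m s‖ ≤ min ((t / s) ^ σ) ((s / t) ^ τ)) →
      (∀ u, Integrable (fun s => (m s / (s : ℂ)) • A s u)
          (volume.restrict (Set.Ioi (0 : ℝ)))) ∧
      ∀ (E F : Set (EuclideanSpace ℝ (Fin n)))
          (hE : MeasurableSet E) (hF : MeasurableSet F), ∀ u,
        ‖indLp hF (∫ s in Set.Ioi (0 : ℝ), (m s / (s : ℂ)) • A s (indLp hE u))‖ ≤
          C' * (1 + setDist E F / t) ^ (-σ) * ‖indLp hE u‖ := by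
  have hKσ : 0 < K - σ := sub_pos.2 hK
  refine ⟨C * (2 ^ σ * (1 / τ + 1 / σ + 1 / (K - σ))), by positivity, ?_⟩
  intro n N _ _ q _ _ _ A hAmeas hA t ht m hmeas hm
  replace hA : OffDiagonalEstimate A C K := hA
  exact ⟨hA.integrable_smul hAmeas hmeas hm hσ hτ hK.le ht,
    fun E F hE hF => hA.norm_indLp_integral_le hE hF hAmeas hmeas hm hσ hτ hK hC.le ht⟩
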